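/- arXiv:2402.19151 — 2 statements merged into one kernel-verified Lean document; each statement's English description precedes it below -/
import Mathlib

section
/- Let A be a nonempty finite alphabet, S a substitution on A, and ω₀ : ℤ → A a configuration. If u is a word of length 2 occurring in the configuration S(ω₀) and u is not legal for S, then there exists a word w of length 2 occurring in ω₀ such that w is not legal for S and u is an infix of S(w). -/
namespace QC

variable {A : Type*}

/-- The shift action of `ℤ` on configurations: `(m · ω)(n) = ω (n - m)`. -/
def shift (m : ℤ) (ω : ℤ → A) : ℤ → A := fun n => ω (n - m)

/-- The word `u` occurs in the configuration `ω` (at some position `k`). -/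
def Occurs (u : List A) (ω : ℤ → A) : Prop :=
  ∃ k : ℤ, u = (List.range u.length).map fun i => ω (k + i)

/-- The dictionary of a configuration: all (nonempty) words occurring in it. -/
def Dict (ω : ℤ → A) : Set (List A) := {u | u ≠ [] ∧ Occurs u ω}

/-- The set of length-`ℓ` words occurring in a configuration. -/
def DictLen (ω : ℤ → A) (ℓ : ℕ) : Set (List A) := {u | u.length = ℓ ∧ Occurs u ω}

/-- The extension of a substitution rule `S : A → List A` to words, by concatenation. -/
def wordSub (S : A → List A) (u : List A) : List A := (u.map S).flatten

/-- A word is legal for `S` if it is an infix of `Sⁿ(a)` for some letter `a` and `n : ℕ`. -/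
def Legal (S : A → List A) (u : List A) : Prop :=
  ∃ (a : A) (n : ℕ), u <:+: (wordSub S)^[n] [a]

/-- `S` is primitive: some power `p ≥ 1` of `S` maps every letter to a word containing
all letters. -/
def Primitive (S : A → List A) : Prop :=
  ∃ p : ℕ, 1 ≤ p ∧ ∀ a b : A, b ∈ (wordSub S)^[p] [a]

/-- The starting position (in `S ω`) of the block coming from the letter `ω k`. -/
def blockStart (S : A → List A) (ω : ℤ → A) (k : ℤ) : ℤ :=
  if 0 ≤ k then ((List.range k.toNat).map fun i => ((S (ω i)).length : ℤ)).sum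
  else -((List.range (-k).toNat).map fun i => ((S (ω (-(i : ℤ) - 1))).length : ℤ)).sum

open Classical in
/-- The extension of a substitution to two-sided configurations: the block structure of
`S ω` is `⋯ S(ω(-1)) . S(ω 0) S(ω 1) ⋯`, with the block of `ω 0` starting at position `0`. -/
noncomputable def confSub [Nonempty A] (S : A → List A) (ω : ℤ → A) : ℤ → A := fun n =>
  if h : ∃ k : ℤ, blockStart S ω k ≤ n ∧ n < blockStart S ω (k + 1) then
    (S (ω (Classical.choose h))).getD (n - blockStart S ω (Classical.choose h)).toNat
      (Classical.arbitrary A)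
  else Classical.arbitrary A

/-- The metric on configurations:
`d(ω₁, ω₂) = inf { 1/(r+1) : ω₁ and ω₂ agree on all |k| < r }`. -/
noncomputable def confDist (ω₁ ω₂ : ℤ → A) : ℝ :=
  sInf {x : ℝ | ∃ r : ℕ, x = 1 / (r + 1) ∧ ∀ k : ℤ, |k| < (r : ℤ) → ω₁ k = ω₂ k}

/-- Distance from a configuration to a set of configurations. -/
noncomputable def distToSet (ω : ℤ → A) (Ω : Set (ℤ → A)) : ℝ :=
  sInf (confDist ω '' Ω)

/-- The Hausdorff distance between two sets of configurations, induced by `confDist`. -/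
noncomputable def hausDist (Ω₁ Ω₂ : Set (ℤ → A)) : ℝ :=
  max (sSup ((fun ω => distToSet ω Ω₂) '' Ω₁)) (sSup ((fun ω => distToSet ω Ω₁) '' Ω₂))

/-- The product topology on `ℤ → A`, where `A` carries the discrete topology. -/
def confTop (A : Type*) : TopologicalSpace (ℤ → A) :=
  @Pi.topologicalSpace ℤ (fun _ => A) fun _ => ⊥

/-- The shift orbit of a configuration. -/
def orbit (ω : ℤ → A) : Set (ℤ → A) := {η | ∃ m : ℤ, η = shift m ω}

/-- The hull of a configuration: the closure of its shift orbit in the product topology. -/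
def hull (ω : ℤ → A) : Set (ℤ → A) := @closure _ (confTop A) (orbit ω)

/-- The `n`-th iterated hull `Ωₙ(ω₀)`: the hull of `Sⁿ(ω₀)`. -/
noncomputable def IHS [Nonempty A] (S : A → List A) (ω₀ : ℤ → A) (n : ℕ) : Set (ℤ → A) :=
  hull ((confSub S)^[n] ω₀)

/-- The substitution subshift `Ω(S) = {ω : W(ω) ⊆ W(S)}`. -/
def OmegaS (S : A → List A) : Set (ℤ → A) := {ω | ∀ u ∈ Dict ω, Legal S u}

/-- Edges of the directed graph `G(S)`: `u → w` iff `u, w` are both illegal and `w` is an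
infix of `S(u)`. -/
def GEdge (S : A → List A) (u w : List A) : Prop :=
  ¬Legal S u ∧ ¬Legal S w ∧ w <:+: wordSub S u

/-- `p` is a directed path of length `ℓ` in `G(S)` (on the vertex set of `2`-words). -/
def GPath (S : A → List A) (p : ℕ → List A) (ℓ : ℕ) : Prop :=
  (∀ i ≤ ℓ, (p i).length = 2) ∧ ∀ j < ℓ, GEdge S (p j) (p (j + 1))

/-- An initial configuration is good for `S` if every directed path in `G(S)` starting at a
`2`-word occurring in `ω₀` has length `< |A|²`. -/
def GoodInit [Fintype A] (S : A → List A) (ω₀ : ℤ → A) : Prop :=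
  ∀ (p : ℕ → List A) (ℓ : ℕ), GPath S p ℓ → Occurs (p 0) ω₀ → ℓ < (Fintype.card A) ^ 2

/-- The substitution matrix of `S`: `M(S)_{a,b}` is the number of occurrences of `a`
in `S(b)`. -/
def subMatrix [Fintype A] [DecidableEq A] (S : A → List A) : Matrix A A ℝ :=
  fun a b => ((S b).count a : ℝ)

/-- The Perron–Frobenius eigenvalue of `S`: the spectral radius of its substitution
matrix (viewed as a complex matrix). -/
noncomputable def pfEigenvalue [Fintype A] [DecidableEq A] (S : A → List A) : ℝ :=
  (spectralRadius ℂ ((subMatrix S).map (algebraMap ℝ ℂ))).toReal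

/-- The periodic configuration `u^∞`, satisfying `u^∞(n) = u(n mod |u|)`. -/
noncomputable def perConf [Nonempty A] (u : List A) : ℤ → A := fun n =>
  u.getD (n % (u.length : ℤ)).toNat (Classical.arbitrary A)

/-- `ℓ²(ℤ, ℂ)`. -/
abbrev l2Z : Type := lp (fun _ : ℤ => ℂ) 2

/-- `H` is the Schrödinger operator on `ℓ²(ℤ,ℂ)` with potential `v ∘ ω`:
`(H ψ)(n) = -(ψ(n+1) + ψ(n-1) - 2ψ(n)) + v(ω(n)) ψ(n)`. -/
def IsSchrodinger (v : A → ℝ) (ω : ℤ → A) (H : l2Z →L[ℂ] l2Z) : Prop :=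
  ∀ (ψ : l2Z) (n : ℤ),
    (H ψ : ℤ → ℂ) n = -((ψ : ℤ → ℂ) (n + 1) + (ψ : ℤ → ℂ) (n - 1) - 2 * (ψ : ℤ → ℂ) n)
      + (v (ω n) : ℂ) * (ψ : ℤ → ℂ) n

/-- The spectrum of `H`, viewed as a subset of `ℝ`. -/
def realSpectrum (H : l2Z →L[ℂ] l2Z) : Set ℝ := {x : ℝ | (x : ℂ) ∈ spectrum ℂ H}

/-!
Since every block `S (ω₀ k)` of `S(ω₀)` is nonempty, a `2`-word of `S(ω₀)` lies inside two
consecutive blocks, i.e. inside `S(w)` for the `2`-word `w = ω₀ k ω₀ (k+1)` of `ω₀`. Legality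
passes from a word to its image under `S` and from a word to its infixes, so `w` is illegal
as soon as `u` is.
-/

theorem _root_.StrictMono.exists_le_lt_succ {f : ℤ → ℤ} (hf : StrictMono f) (n : ℤ) :
    ∃ k, f k ≤ n ∧ n < f (k + 1) := by
  have hgrowth : Monotone fun k => f k - k :=
    monotone_int_of_le_succ fun k => by have := hf (lt_add_one k); omega
  obtain ⟨k, hk, hmax⟩ := Int.exists_greatest_of_bdd (P := fun k => f k ≤ n)
    ⟨max (n - f 0) 0, fun k hk => by
      rcases le_or_gt 0 k with h | h
      · have := hgrowth h; dsimp only at this hk; omega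
      · omega⟩
    ⟨min (n - f 0) 0, by have := hgrowth (min_le_right (n - f 0) 0); dsimp only at this ⊢; omega⟩
  exact ⟨k, hk, not_le.mp fun h => by have := hmax (k + 1) h; omega⟩

-- In `Occurs` (and in `blockStart`), `List.range _` is coerced to a `List ℤ` through the list
-- monad, hence the `bind`/`pure` normalisation.
theorem occurs_iff_getElem {u : List A} {ω : ℤ → A} :
    Occurs u ω ↔ ∃ k : ℤ, ∀ (j : ℕ) (hj : j < u.length), u[j] = ω (k + j) := by
  refine exists_congr fun k => ?_
  simp only [List.bind_eq_flatMap, List.pure_def, ← List.map_eq_flatMap, List.map_map,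
    List.ext_getElem_iff]
  simp

theorem Legal.of_infix {S : A → List A} {u v : List A} (hv : Legal S v) (huv : u <:+: v) :
    Legal S u := by
  obtain ⟨a, n, hn⟩ := hv
  exact ⟨a, n, huv.trans hn⟩

theorem wordSub_infix (S : A → List A) {u v : List A} (huv : u <:+: v) :
    wordSub S u <:+: wordSub S v := by
  obtain ⟨s, t, rfl⟩ := huv
  exact ⟨wordSub S s, wordSub S t, by simp [wordSub]⟩

theorem Legal.wordSub {S : A → List A} {v : List A} (hv : Legal S v) :
    Legal S (QC.wordSub S v) := by
  obtain ⟨a, n, hn⟩ := hv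
  refine ⟨a, n + 1, ?_⟩
  rw [Function.iterate_succ_apply']
  exact wordSub_infix S hn

section Blocks

variable (S : A → List A) (ω : ℤ → A)

theorem blockStart_natCast (m : ℕ) :
    blockStart S ω m = ((List.range m).map fun i : ℕ => ((S (ω i)).length : ℤ)).sum := by
  simp only [blockStart, Nat.cast_nonneg, if_true, Int.toNat_natCast, List.bind_eq_flatMap,
    List.pure_def, ← List.map_eq_flatMap, List.map_map, Function.comp_def]

theorem blockStart_neg_natCast (m : ℕ) :
    blockStart S ω (-m) =
      -((List.range m).map fun i : ℕ => ((S (ω (-i - 1))).length : ℤ)).sum := by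
  rcases m.eq_zero_or_pos with rfl | hm
  · simp [blockStart]
  · simp only [blockStart, show ¬(0 : ℤ) ≤ -m by omega, if_false, neg_neg, Int.toNat_natCast,
      List.bind_eq_flatMap, List.pure_def, ← List.map_eq_flatMap, List.map_map,
      Function.comp_def]

theorem blockStart_succ (k : ℤ) :
    blockStart S ω (k + 1) = blockStart S ω k + (S (ω k)).length := by
  rcases k with m | m
  · simp only [Int.ofNat_eq_natCast, ← Nat.cast_succ, blockStart_natCast, List.range_succ,
      List.map_append, List.sum_append, List.map_cons, List.map_nil, List.sum_cons,
      List.sum_nil, add_zero]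
  · rw [Int.negSucc_eq, show -((m : ℤ) + 1) + 1 = -m by ring, ← Nat.cast_succ,
      blockStart_neg_natCast, blockStart_neg_natCast, List.range_succ, List.map_append,
      List.sum_append]
    simp only [List.map_cons, List.map_nil, List.sum_singleton, Nat.cast_succ, neg_add,
      sub_eq_add_neg]
    ring

theorem blockStart_strictMono (hS : ∀ a, S a ≠ []) : StrictMono (blockStart S ω) :=
  strictMono_int_of_lt_succ fun k => by
    rw [blockStart_succ]
    have := List.length_pos_iff.mpr (hS (ω k))
    omega

theorem confSub_blockStart_add [Nonempty A] (hS : ∀ a, S a ≠ []) (k : ℤ) {i : ℕ}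
    (hi : i < (S (ω k)).length) :
    confSub S ω (blockStart S ω k + i) = (S (ω k))[i] := by
  have hblock : blockStart S ω k ≤ blockStart S ω k + i ∧
      blockStart S ω k + i < blockStart S ω (k + 1) := by
    rw [blockStart_succ]; omega
  have hex : ∃ j, blockStart S ω j ≤ blockStart S ω k + i ∧
      blockStart S ω k + i < blockStart S ω (j + 1) := ⟨k, hblock⟩
  have hchoose : Classical.choose hex = k := by
    obtain ⟨h1, h2⟩ := Classical.choose_spec hex
    have hmono := blockStart_strictMono S ω hS
    have := hmono.lt_iff_lt.mp (h1.trans_lt hblock.2)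
    have := hmono.lt_iff_lt.mp (hblock.1.trans_lt h2)
    omega
  rw [confSub, dif_pos hex, hchoose]
  simp [hi]

theorem confSub_blockStart_add_eq_wordSub [Nonempty A] (hS : ∀ a, S a ≠ []) (k : ℤ) {j : ℕ}
    (hj : j < (wordSub S [ω k, ω (k + 1)]).length) :
    confSub S ω (blockStart S ω k + j) = (wordSub S [ω k, ω (k + 1)])[j] := by
  have hw : wordSub S [ω k, ω (k + 1)] = S (ω k) ++ S (ω (k + 1)) := by simp [wordSub]
  simp only [hw, List.getElem_append] at hj ⊢
  split_ifs with h
  · exact confSub_blockStart_add S ω hS k h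
  · obtain ⟨i, rfl⟩ := Nat.exists_eq_add_of_le (not_lt.mp h)
    have := confSub_blockStart_add S ω hS (k + 1) (i := i) (by simp at hj; omega)
    rw [blockStart_succ] at this
    simpa [add_assoc] using this

theorem exists_infix_wordSub_of_occurs_confSub [Nonempty A] (hS : ∀ a, S a ≠ [])
    {u : List A} (hu : u.length = 2) (hocc : Occurs u (confSub S ω)) :
    ∃ k : ℤ, u <:+: wordSub S [ω k, ω (k + 1)] := by
  obtain ⟨n, hn⟩ := occurs_iff_getElem.mp hocc
  obtain ⟨k, hk1, hk2⟩ := (blockStart_strictMono S ω hS).exists_le_lt_succ n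
  obtain ⟨i, rfl⟩ : ∃ i : ℕ, n = blockStart S ω k + i := ⟨(n - blockStart S ω k).toNat, by omega⟩
  refine ⟨k, ?_⟩
  have hlen : i + 2 ≤ (wordSub S [ω k, ω (k + 1)]).length := by
    rw [blockStart_succ] at hk2
    have := List.length_pos_iff.mpr (hS (ω (k + 1)))
    simp [wordSub]
    omega
  have hu' : u = ((wordSub S [ω k, ω (k + 1)]).drop i).take 2 := by
    apply List.ext_getElem (by simp; omega)
    intro j hj _
    rw [hn j hj, add_assoc, ← Nat.cast_add, confSub_blockStart_add_eq_wordSub S ω hS k (by omega)]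
    simp
  rw [hu']
  exact (List.take_prefix _ _).isInfix.trans (List.drop_suffix _ _).isInfix

end Blocks

theorem stmt3_general {A : Type*} [Nonempty A] (S : A → List A) (hS : ∀ a, S a ≠ [])
    (ω₀ : ℤ → A) (u : List A) (hu : u.length = 2)
    (hocc : Occurs u (confSub S ω₀)) (hu_illegal : ¬Legal S u) :
    ∃ w : List A, w.length = 2 ∧ Occurs w ω₀ ∧ ¬Legal S w ∧ u <:+: wordSub S w := by
  obtain ⟨k, hk⟩ := exists_infix_wordSub_of_occurs_confSub S ω₀ hS hu hocc
  exact ⟨[ω₀ k, ω₀ (k + 1)], rfl, ⟨k, by simp [List.range_succ]⟩,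
    fun hw => hu_illegal (hw.wordSub.of_infix hk), hk⟩

/-- an illegal `2`-word occurring in `S(ω₀)` comes from an illegal `2`-word
occurring in `ω₀`. -/
theorem stmt3 {A : Type*} [Fintype A] [Nonempty A] (S : A → List A) (hS : ∀ a, S a ≠ [])
    (ω₀ : ℤ → A) (u : List A) (hu : u.length = 2)
    (hocc : Occurs u (confSub S ω₀)) (hu_illegal : ¬Legal S u) :
    ∃ w : List A, w.length = 2 ∧ Occurs w ω₀ ∧ ¬Legal S w ∧ u <:+: wordSub S w :=
  stmt3_general S hS ω₀ u hu hocc hu_illegal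

end QC
end

section
/- Let A be a nonempty finite alphabet and S a primitive substitution on A with |S(a)| ≥ 2 for some letter a. Then S is linearly repetitive: there exists a constant C ≥ 1 such that for all legal words u and w, if |w| ≥ C·|u| then u is an infix of w. -/
namespace QC

variable {A : Type*}

section AuxLemmas
variable {A : Type*}

lemma wordSub_append (S : A → List A) (u v : List A) :
    wordSub S (u ++ v) = wordSub S u ++ wordSub S v := by
  simp [wordSub]

lemma iter_append (S : A → List A) (k : ℕ) (u v : List A) :
    (wordSub S)^[k] (u ++ v) = (wordSub S)^[k] u ++ (wordSub S)^[k] v := by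
  induction k generalizing u v with
  | zero => simp
  | succ k ih => simp [Function.iterate_succ_apply, wordSub_append, ih]

lemma iter_infix (S : A → List A) (k : ℕ) {u v : List A} (h : u <:+: v) :
    (wordSub S)^[k] u <:+: (wordSub S)^[k] v := by
  obtain ⟨s, t, rfl⟩ := h
  rw [iter_append, iter_append]
  exact List.infix_append _ _ _

lemma iter_nil (S : A → List A) (k : ℕ) : (wordSub S)^[k] ([] : List A) = [] := by
  induction k with
  | zero => rfl
  | succ k ih => rw [Function.iterate_succ_apply, show wordSub S [] = [] from rfl, ih]

lemma iter_eq_flatten (S : A → List A) (k : ℕ) (v : List A) :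
    (wordSub S)^[k] v = (v.map fun a => (wordSub S)^[k] [a]).flatten := by
  induction v with
  | nil => simp [iter_nil]
  | cons a v ih =>
    rw [show a :: v = [a] ++ v from rfl, iter_append]
    simp [ih]

lemma length_wordSub_le {S : A → List A} {L : ℕ} (hL : ∀ a, (S a).length ≤ L) (v : List A) :
    (wordSub S v).length ≤ L * v.length := by
  have hmem : ∀ x ∈ (v.map S).map List.length, x ≤ L := by
    intro x hx
    simp only [List.mem_map] at hx
    obtain ⟨w, ⟨a, _, rfl⟩, rfl⟩ := hx
    exact hL a
  have h := List.sum_le_card_nsmul ((v.map S).map List.length) L hmem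
  simpa [wordSub, List.length_flatten, mul_comm] using h

lemma length_le_length_wordSub {S : A → List A} (hS : ∀ a, S a ≠ []) (v : List A) :
    v.length ≤ (wordSub S v).length := by
  have hmem : ∀ x ∈ (v.map S).map List.length, 1 ≤ x := by
    intro x hx
    simp only [List.mem_map] at hx
    obtain ⟨w, ⟨a, _, rfl⟩, rfl⟩ := hx
    exact List.length_pos_iff.mpr (hS a)
  have h := List.length_le_sum_of_one_le ((v.map S).map List.length) hmem
  simpa [wordSub, List.length_flatten] using h

lemma length_iter_le {S : A → List A} {L : ℕ} (hL : ∀ a, (S a).length ≤ L) (k : ℕ) (v : List A) :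
    ((wordSub S)^[k] v).length ≤ L ^ k * v.length := by
  induction k generalizing v with
  | zero => simp
  | succ k ih =>
    rw [Function.iterate_succ_apply]
    calc ((wordSub S)^[k] (wordSub S v)).length ≤ L ^ k * (wordSub S v).length := ih _
      _ ≤ L ^ k * (L * v.length) := Nat.mul_le_mul_left _ (length_wordSub_le hL v)
      _ = L ^ (k + 1) * v.length := by ring

lemma length_le_length_iter {S : A → List A} (hS : ∀ a, S a ≠ []) (k : ℕ) (v : List A) :
    v.length ≤ ((wordSub S)^[k] v).length := by
  induction k generalizing v with
  | zero => simp
  | succ k ih =>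
    rw [Function.iterate_succ_apply]
    exact le_trans (length_le_length_wordSub hS v) (ih _)

lemma singleton_infix_of_mem {c : A} {l : List A} (h : c ∈ l) : [c] <:+: l := by
  obtain ⟨s, t, rfl⟩ := List.append_of_mem h
  exact ⟨s, t, by simp⟩

lemma mem_iter_of_ge {S : A → List A} (hS : ∀ a, S a ≠ []) {p : ℕ}
    (hp : ∀ a b : A, b ∈ (wordSub S)^[p] [a]) :
    ∀ n, p ≤ n → ∀ a b : A, b ∈ (wordSub S)^[n] [a] := by
  intro n hn a b
  obtain ⟨j, rfl⟩ := Nat.exists_eq_add_of_le hn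
  rw [Function.iterate_add_apply]
  have hne : (wordSub S)^[j] [a] ≠ [] := by
    have h1 := length_le_length_iter hS j [a]
    intro h; rw [h] at h1; simp at h1
  obtain ⟨c, hc⟩ := List.exists_mem_of_ne_nil _ hne
  have h2 := iter_infix S p (singleton_infix_of_mem hc)
  exact h2.sublist.mem (hp c b)

lemma length_iter_succ {S : A → List A} (hS : ∀ a, S a ≠ []) {p : ℕ}
    (hp : ∀ a b : A, b ∈ (wordSub S)^[p] [a]) {a₀ : A} (ha₀ : 2 ≤ (S a₀).length) :
    ∀ n, p ≤ n → ∀ a : A,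
      ((wordSub S)^[n] [a]).length + 1 ≤ ((wordSub S)^[n + 1] [a]).length := by
  intro n hn a
  rw [Function.iterate_succ_apply']
  have hmem : a₀ ∈ (wordSub S)^[n] [a] := mem_iter_of_ge hS hp n hn a a₀
  obtain ⟨s, t, hst⟩ := List.append_of_mem hmem
  rw [hst, show s ++ a₀ :: t = s ++ [a₀] ++ t by simp, wordSub_append, wordSub_append]
  have h1 := length_le_length_wordSub hS s
  have h2 := length_le_length_wordSub hS t
  have h3 : wordSub S [a₀] = S a₀ := by simp [wordSub]
  rw [h3]
  simp only [List.length_append, List.length_cons, List.length_nil]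
  omega

lemma exists_min_len {S : A → List A} (hS : ∀ a, S a ≠ []) {p : ℕ}
    (hp : ∀ a b : A, b ∈ (wordSub S)^[p] [a]) {a₀ : A} (ha₀ : 2 ≤ (S a₀).length) :
    ∀ n (a : A), n ≤ ((wordSub S)^[p + n] [a]).length := by
  intro n
  induction n with
  | zero => simp
  | succ n ih =>
    intro a
    have h1 := length_iter_succ hS hp ha₀ (p + n) (Nat.le_add_right _ _) a
    have h2 := ih a
    rw [show p + (n + 1) = (p + n) + 1 from rfl]
    omega

lemma length_iter_le_iter_add {S : A → List A} {p : ℕ}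
    (hp : ∀ a b : A, b ∈ (wordSub S)^[p] [a]) (j : ℕ) (a b : A) :
    ((wordSub S)^[j] [b]).length ≤ ((wordSub S)^[j + p] [a]).length := by
  rw [Function.iterate_add_apply]
  exact (iter_infix S j (singleton_infix_of_mem (hp a b))).length_le

lemma legal_cover {S : A → List A} (hS : ∀ a, S a ≠ []) {p : ℕ}
    (hp : ∀ a b : A, b ∈ (wordSub S)^[p] [a]) {x : List A} (hx : Legal S x) :
    ∃ m : ℕ, ∀ N, m ≤ N → ∀ c : A, x <:+: (wordSub S)^[N] [c] := by
  obtain ⟨a, n₀, h⟩ := hx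
  refine ⟨n₀ + p, fun N hN c => ?_⟩
  have ha : a ∈ (wordSub S)^[N - n₀] [c] := mem_iter_of_ge hS hp _ (by omega) c a
  have h2 := iter_infix S n₀ (singleton_infix_of_mem ha)
  rw [← Function.iterate_add_apply, show n₀ + (N - n₀) = N by omega] at h2
  exact h.trans h2


lemma infix_append_cases {x y u : List A} (h : u <:+: x ++ y) :
    u <:+: x ∨ u <:+: y ∨
      ∃ s t, u = s ++ t ∧ s ≠ [] ∧ t ≠ [] ∧ s <:+ x ∧ t <+: y := by
  obtain ⟨a, b, hab⟩ := h
  by_cases h1 : a.length + u.length ≤ x.length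
  · left
    have hp1 : a ++ u <+: x ++ y := ⟨b, hab⟩
    have hp2 : a ++ u <+: x :=
      List.prefix_of_prefix_length_le hp1 (List.prefix_append x y)
        (by simpa [List.length_append] using h1)
    obtain ⟨t, ht⟩ := hp2
    exact ⟨a, t, ht⟩
  · by_cases h2 : x.length ≤ a.length
    · right; left
      have ha1 : a <+: x ++ y := ⟨u ++ b, by simpa [List.append_assoc] using hab⟩
      have ha2 : x <+: a := List.prefix_of_prefix_length_le (List.prefix_append x y) ha1 h2
      obtain ⟨a', rfl⟩ := ha2
      simp only [List.append_assoc] at hab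
      have h3 := List.append_cancel_left hab
      exact ⟨a', b, by simpa [List.append_assoc] using h3⟩
    · right; right
      push_neg at h1 h2
      have e1 : (x ++ y).take x.length = x := by
        rw [List.take_append, List.take_length, Nat.sub_self, List.take_zero,
          List.append_nil]
      have e2 : (a ++ u ++ b).take x.length = a ++ u.take (x.length - a.length) := by
        rw [List.take_append]
        have hb0 : x.length - (a ++ u).length = 0 := by rw [List.length_append]; omega
        rw [hb0, List.take_zero, List.append_nil, List.take_append,
          List.take_of_length_le (le_of_lt h2)]
      have hx : a ++ u.take (x.length - a.length) = x := by rw [← e2, hab]; exact e1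
      have hy : u.drop (x.length - a.length) ++ b = y := by
        have h3 : a ++ (u.take (x.length - a.length) ++ u.drop (x.length - a.length)) ++ b
            = (a ++ u.take (x.length - a.length)) ++ y := by
          rw [List.take_append_drop, hx]; exact hab
        simp only [List.append_assoc] at h3
        exact List.append_cancel_left (List.append_cancel_left h3)
      refine ⟨u.take (x.length - a.length), u.drop (x.length - a.length),
        (List.take_append_drop _ u).symm, ?_, ?_, ⟨a, hx⟩, ⟨b, hy⟩⟩
      · apply List.length_pos_iff.mp
        rw [List.length_take]
        omega
      · apply List.length_pos_iff.mp
        rw [List.length_drop]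
        omega

lemma infix_flatten_pair {f : A → List A} {n : ℕ} (hf : ∀ a, n ≤ (f a).length) :
    ∀ (v u : List A), u ≠ [] → u.length ≤ n → u <:+: (v.map f).flatten →
      ∃ x, x ≠ [] ∧ x.length ≤ 2 ∧ x <:+: v ∧ u <:+: (x.map f).flatten := by
  intro v
  induction v with
  | nil =>
    intro u hne _ h
    simp only [List.map_nil, List.flatten_nil, List.infix_nil] at h
    exact absurd h hne
  | cons a v ih =>
    intro u hne hlen h
    rw [List.map_cons, List.flatten_cons] at h
    rcases infix_append_cases h with h1 | h1 | ⟨s, t, rfl, hs, ht, hsx, hty⟩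
    · exact ⟨[a], by simp, by simp, ⟨[], v, by simp⟩, by simpa using h1⟩
    · obtain ⟨x, hx1, hx2, hx3, hx4⟩ := ih u hne hlen h1
      exact ⟨x, hx1, hx2, List.infix_cons hx3, hx4⟩
    · rcases v with _ | ⟨b, v'⟩
      · simp only [List.map_nil, List.flatten_nil, List.prefix_nil] at hty
        exact absurd hty ht
      · have hs1 : 1 ≤ s.length := List.length_pos_iff.mpr hs
        have hstlen : s.length + t.length ≤ n := by simpa [List.length_append] using hlen
        have hfb : f b <+: (List.map f (b :: v')).flatten := by
          rw [List.map_cons, List.flatten_cons]; exact List.prefix_append _ _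
        have htb : t <+: f b := List.prefix_of_prefix_length_le hty hfb (by
          have := hf b; omega)
        obtain ⟨e1, he1⟩ := hsx
        obtain ⟨e2, he2⟩ := htb
        refine ⟨[a, b], by simp, by simp, ⟨[], v', by simp⟩, e1, e2, ?_⟩
        simp only [List.map_cons, List.map_nil, List.flatten_cons, List.flatten_nil,
          List.append_nil]
        rw [← he1, ← he2]
        simp [List.append_assoc]

lemma flatten_contains_block {g : ℕ} :
    ∀ (Lb : List (List A)) (u : List A), (∀ l ∈ Lb, l.length ≤ g) →
      u <:+: Lb.flatten → 2 * g + 1 ≤ u.length → ∃ l ∈ Lb, l <:+: u := by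
  intro Lb
  induction Lb with
  | nil =>
    intro u _ h hlen
    have := h.length_le
    simp only [List.flatten_nil, List.length_nil] at this
    omega
  | cons b Lb ih =>
    intro u hbnd h hlen
    rw [List.flatten_cons] at h
    rcases infix_append_cases h with h1 | h1 | ⟨s, t, rfl, hs, ht, hsx, hty⟩
    · exfalso
      have h2 := h1.length_le
      have h3 := hbnd b (by simp)
      omega
    · obtain ⟨l, hl, hlu⟩ := ih u (fun l hl => hbnd l (by simp [hl])) h1 hlen
      exact ⟨l, by simp [hl], hlu⟩
    · have hslen : s.length ≤ g := le_trans hsx.length_le (hbnd b (by simp))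
      have htlen : g + 1 ≤ t.length := by
        have : 2 * g + 1 ≤ s.length + t.length := by simpa [List.length_append] using hlen
        omega
      rcases Lb with _ | ⟨b', Lb'⟩
      · exfalso
        simp only [List.flatten_nil, List.prefix_nil] at hty
        rw [hty] at htlen
        simp at htlen
      · have hb' : b' <+: (b' :: Lb').flatten := by
          rw [List.flatten_cons]; exact List.prefix_append _ _
        have hbt : b' <+: t := List.prefix_of_prefix_length_le hb' hty (by
          have := hbnd b' (by simp); omega)
        refine ⟨b', by simp, ?_⟩
        obtain ⟨e2, rfl⟩ := hbt
        exact ⟨s, e2, by simp [List.append_assoc]⟩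

end AuxLemmas

/-- a primitive substitution is linearly repetitive. -/
theorem stmt14 {A : Type*} [Fintype A] [Nonempty A] (S : A → List A) (hS : ∀ a, S a ≠ [])
    (hprim : Primitive S) (hexp : ∃ a, 2 ≤ (S a).length) :
    ∃ C : ℝ, 1 ≤ C ∧ ∀ u w : List A, Legal S u → Legal S w →
      C * (u.length : ℝ) ≤ (w.length : ℝ) → u <:+: w := by
  classical
  obtain ⟨p, hp1, hp⟩ := hprim
  obtain ⟨a₀, ha₀⟩ := hexp
  obtain ⟨c₀⟩ := ‹Nonempty A›
  set L := Finset.univ.sup (fun a : A => (S a).length) with hLdef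
  have hL : ∀ a, (S a).length ≤ L := fun a => by
    rw [hLdef]; exact Finset.le_sup (f := fun a : A => (S a).length) (Finset.mem_univ a)
  have hL1 : 1 ≤ L := le_trans (List.length_pos_iff.mpr (hS c₀)) (hL c₀)
  have hcov : ∀ q : A × A, ∃ m : ℕ, Legal S [q.1, q.2] →
      ∀ N, m ≤ N → ∀ c : A, [q.1, q.2] <:+: (wordSub S)^[N] [c] := by
    intro q
    by_cases h : Legal S [q.1, q.2]
    · obtain ⟨m, hm⟩ := legal_cover hS hp h
      exact ⟨m, fun _ => hm⟩
    · exact ⟨0, fun h' => absurd h' h⟩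
  choose e he using hcov
  set M₀ := max p (Finset.univ.sup e) with hM₀def
  have hM₀p : p ≤ M₀ := le_max_left _ _
  have cover2 : ∀ x : List A, Legal S x → x ≠ [] → x.length ≤ 2 →
      ∀ c : A, x <:+: (wordSub S)^[M₀] [c] := by
    intro x hx hne hlen c
    rcases x with _ | ⟨a, _ | ⟨b, _ | ⟨d, x'⟩⟩⟩
    · exact absurd rfl hne
    · exact singleton_infix_of_mem (mem_iter_of_ge hS hp _ hM₀p c a)
    · exact he (a, b) hx _
        (le_trans (Finset.le_sup (Finset.mem_univ (a, b))) (le_max_right _ _)) c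
    · simp at hlen
  refine ⟨((3 * L ^ (M₀ + p + 1) : ℕ) : ℝ), ?_, ?_⟩
  · have hpow : 1 ≤ L ^ (M₀ + p + 1) := Nat.one_le_pow _ _ (by omega)
    have h1 : (1 : ℕ) ≤ 3 * L ^ (M₀ + p + 1) := by omega
    exact_mod_cast h1
  intro u w hu hw hlen
  by_cases hu0 : u = []
  · subst hu0; exact ⟨[], w, by simp⟩
  have hn : 1 ≤ u.length := List.length_pos_iff.mpr hu0
  have hek : ∃ k : ℕ, ∀ a : A, u.length ≤ ((wordSub S)^[k] [a]).length :=
    ⟨p + u.length, fun a => exists_min_len hS hp ha₀ u.length a⟩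
  set k := Nat.find hek with hkdef
  have hk : ∀ a : A, u.length ≤ ((wordSub S)^[k] [a]).length := Nat.find_spec hek
  have hg : ∀ c : A, ((wordSub S)^[k] [c]).length ≤ L ^ (p + 1) * u.length := by
    intro c
    have hp2 : 1 ≤ L ^ (p + 1) := Nat.one_le_pow _ _ (by omega)
    rcases Nat.eq_zero_or_pos k with h0 | hpos
    · rw [h0]
      have h1 : ((wordSub S)^[0] [c]).length = 1 := rfl
      rw [h1]
      have h2 := Nat.mul_le_mul hp2 hn
      omega
    · have hmin := Nat.find_min hek (show k - 1 < k by omega)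
      push_neg at hmin
      obtain ⟨a', ha'⟩ := hmin
      by_cases hkp : p + 1 ≤ k
      · have h1 : ((wordSub S)^[k - 1 - p] [c]).length
            ≤ ((wordSub S)^[k - 1] [a']).length := by
          have h := length_iter_le_iter_add hp (k - 1 - p) a' c
          rw [show k - 1 - p + p = k - 1 by omega] at h
          exact h
        have h2 : ((wordSub S)^[k] [c]).length
            ≤ L ^ (p + 1) * ((wordSub S)^[k - 1 - p] [c]).length := by
          have h := length_iter_le hL (p + 1) ((wordSub S)^[k - 1 - p] [c])
          rw [← Function.iterate_add_apply, show p + 1 + (k - 1 - p) = k by omega] at h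
          exact h
        have h3 : ((wordSub S)^[k - 1 - p] [c]).length ≤ u.length := by omega
        calc ((wordSub S)^[k] [c]).length
            ≤ L ^ (p + 1) * ((wordSub S)^[k - 1 - p] [c]).length := h2
          _ ≤ L ^ (p + 1) * u.length := Nat.mul_le_mul_left _ h3
      · have h := length_iter_le hL k [c]
        have h2 : L ^ k ≤ L ^ (p + 1) := Nat.pow_le_pow_right hL1 (by omega)
        have h3 : L ^ (p + 1) ≤ L ^ (p + 1) * u.length :=
          Nat.le_mul_of_pos_right _ (by omega)
        simp only [List.length_cons, List.length_nil] at h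
        omega
  obtain ⟨m₁, hm₁⟩ := legal_cover hS hp hu
  set m' := max m₁ k with hm'def
  have hum : u <:+: (wordSub S)^[m'] [a₀] := hm₁ m' (le_max_left _ _) a₀
  rw [show m' = k + (m' - k) by omega, Function.iterate_add_apply,
    iter_eq_flatten S k ((wordSub S)^[m' - k] [a₀])] at hum
  obtain ⟨x, hx1, hx2, hx3, hx4⟩ := infix_flatten_pair hk _ u hu0 le_rfl hum
  rw [← iter_eq_flatten] at hx4
  have hxleg : Legal S x := ⟨a₀, m' - k, hx3⟩
  have huN : ∀ c : A, u <:+: (wordSub S)^[k + M₀] [c] := by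
    intro c
    have h1 := iter_infix S k (cover2 x hxleg hx1 hx2 c)
    rw [← Function.iterate_add_apply] at h1
    exact hx4.trans h1
  have hblk : ∀ c : A, ((wordSub S)^[k + M₀] [c]).length
      ≤ L ^ (M₀ + p + 1) * u.length := by
    intro c
    rw [show k + M₀ = M₀ + k by omega, Function.iterate_add_apply]
    calc ((wordSub S)^[M₀] ((wordSub S)^[k] [c])).length
        ≤ L ^ M₀ * ((wordSub S)^[k] [c]).length := length_iter_le hL M₀ _
      _ ≤ L ^ M₀ * (L ^ (p + 1) * u.length) := Nat.mul_le_mul_left _ (hg c)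
      _ = L ^ (M₀ + p + 1) * u.length := by rw [← mul_assoc, ← pow_add, show M₀ + (p + 1) = M₀ + p + 1 from rfl]
  obtain ⟨m₂, hm₂⟩ := legal_cover hS hp hw
  set N := k + M₀ with hNdef
  set m := max m₂ N with hmdef
  have hwm : w <:+: (wordSub S)^[m] [a₀] := hm₂ m (le_max_left _ _) a₀
  rw [show m = N + (m - N) by omega, Function.iterate_add_apply,
    iter_eq_flatten S N ((wordSub S)^[m - N] [a₀])] at hwm
  have hwlen : 2 * (L ^ (M₀ + p + 1) * u.length) + 1 ≤ w.length := by
    have h1 : (3 * (L ^ (M₀ + p + 1) * u.length) : ℕ) ≤ w.length := by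
      rw [← Nat.cast_le (α := ℝ)]
      push_cast
      push_cast at hlen
      nlinarith [hlen]
    have hpow : 1 ≤ L ^ (M₀ + p + 1) := Nat.one_le_pow _ _ (by omega)
    have h2 := Nat.mul_le_mul hpow hn
    omega
  have hbnd : ∀ l ∈ ((wordSub S)^[m - N] [a₀]).map (fun a => (wordSub S)^[N] [a]),
      l.length ≤ L ^ (M₀ + p + 1) * u.length := by
    intro l hl
    obtain ⟨c, _, rfl⟩ := List.mem_map.mp hl
    exact hblk c
  obtain ⟨l, hl, hlw⟩ := flatten_contains_block _ w hbnd hwm hwlen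
  obtain ⟨c', _, rfl⟩ := List.mem_map.mp hl
  exact (huN c').trans hlw


end QC
end
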